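/- The map p ↦ (pᵗ)_C is injective on 𝒫**(2n); that is, if p, p′ ∈ 𝒫**(2n) satisfy (pᵗ)_C = ((p′)ᵗ)_C, then p = p′. -/

import Mathlib

open Finset

/-- A partition of `N`: an antitone function `ℕ → ℕ` (the 0-indexed parts, padded with
zeros) supported on `{0, …, N-1}` whose parts sum to `N`. -/
def IsPartition (N : ℕ) (p : ℕ → ℕ) : Prop :=
  Antitone p ∧ (∀ i, N ≤ i → p i = 0) ∧ ∑ i ∈ Finset.range N, p i = N

/-- Dominance order: `Dominates p q` means `q ≤ p`, i.e. every partial sum of the parts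
of `q` is at most the corresponding partial sum of the parts of `p`. -/
def Dominates (p q : ℕ → ℕ) : Prop :=
  ∀ j, ∑ i ∈ Finset.range j, q i ≤ ∑ i ∈ Finset.range j, p i

/-- Multiplicity of the value `k` among the first `N` parts of `p`. -/
def mult (N : ℕ) (p : ℕ → ℕ) (k : ℕ) : ℕ :=
  ((Finset.range N).filter (fun i => p i = k)).card

/-- Multiplicity of the value `k` among the entries of a tuple of naturals. -/
def multN {n : ℕ} (v : Fin n → ℕ) (k : ℕ) : ℕ :=
  (Finset.univ.filter (fun i => v i = k)).card

/-- Euclidean norm of a tuple of naturals. -/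
noncomputable def enormN {n : ℕ} (v : Fin n → ℕ) : ℝ :=
  Real.sqrt (∑ i, ((v i : ℝ)) ^ 2)

/-- `IsPStar n p μ₀ μ` says that `p ∈ 𝒫*(2n)` with decomposition data `(μ₀; μ₁, μ₂, …)`:
`p` is a partition of `2n` whose multiset of parts is the union of the doubled partition
`[μ₁, μ₁, μ₂, μ₂, …]` and a single even part `2μ₀` (omitted if `μ₀ = 0`).  Equivalently,
for each `k ≥ 1` the multiplicity of `k` in `p` equals twice its multiplicity in `μ`, plus
one if `k = 2μ₀`. -/
def IsPStar (n : ℕ) (p : ℕ → ℕ) (μ₀ : ℕ) (μ : ℕ → ℕ) : Prop :=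
  IsPartition (2 * n) p ∧ Antitone μ ∧ (∀ i, n ≤ i → μ i = 0) ∧
  ∀ k, 1 ≤ k → mult (2 * n) p k = 2 * mult n μ k + (if k = 2 * μ₀ then 1 else 0)

/-- The transpose of a partition (with parts supported on `{0, …, N-1}`):
`(pᵗ)_j = #{i : p_i ≥ j+1}` (0-indexed). -/
def transposeP (N : ℕ) (p : ℕ → ℕ) (j : ℕ) : ℕ :=
  ((Finset.range N).filter (fun i => j + 1 ≤ p i)).card

/-- A partition (of `N`, with parts supported on `{0, …, N-1}`) is of type `C` if every odd
part occurs with even multiplicity. -/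
def TypeC (N : ℕ) (p : ℕ → ℕ) : Prop :=
  ∀ k, Odd k → Even (mult N p k)

/-- `IsCCollapse N p r` says that `r = p_C` is the C-collapse of `p`: the greatest element,
in the dominance order, of the set of type `C` partitions of `N` that are `≤ p`. -/
def IsCCollapse (N : ℕ) (p r : ℕ → ℕ) : Prop :=
  IsPartition N r ∧ TypeC N r ∧ Dominates p r ∧
    ∀ r', IsPartition N r' → TypeC N r' → Dominates p r' → Dominates r r'

/-!
Let `p ∈ 𝒫**(2n)` and `q = pᵗ`. Since the parts of `p` come in pairs except for one even part
`2μ₀` that is at least every other part, `q` has exactly `2μ₀` nonzero parts and all of them are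
odd. For such `q` the C-collapse is computed pair by pair: a pair of consecutive parts
`q₂ᵢ > q₂ᵢ₊₁` becomes `(q₂ᵢ - 1, q₂ᵢ₊₁ + 1)`, an equal pair is kept. This lowers the partial sum
`q₀ + ⋯ + q_{j-1}` by one exactly at the odd `j` with `q_{j-1} > q_j`, and no type C partition
`r ≤ q` can keep that partial sum: it is odd, so `r_{j-1} = r_j`, whereas dominance at `j - 1`
and `j + 1` forces `q_{j-1} ≤ r_j ≤ q_j`. The collapse is injective on such `q`, since an odd
entry is unchanged and an even one was moved by one in a direction fixed by the parity of its
index. Hence `(pᵗ)_C` determines `q`, and `p = qᵗ`.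
-/

section Partition

variable {N : ℕ} {p : ℕ → ℕ}

theorem IsPartition.lt_of_pos (hp : IsPartition N p) {i : ℕ} (h : 0 < p i) : i < N := by
  by_contra hi
  rw [hp.2.1 i (not_lt.1 hi)] at h
  exact lt_irrefl 0 h

theorem IsPartition.le (hp : IsPartition N p) (i : ℕ) : p i ≤ N := by
  rcases lt_or_ge i N with hi | hi
  · calc p i ≤ ∑ k ∈ range N, p k := single_le_sum (fun _ _ => Nat.zero_le _) (mem_range.2 hi)
      _ = N := hp.2.2
  · simp [hp.2.1 i hi]

theorem Dominates.antisymm {p q : ℕ → ℕ} (hpq : Dominates p q) (hqp : Dominates q p) :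
    p = q := by
  funext j
  have h := le_antisymm (hqp j) (hpq j)
  have h' := le_antisymm (hqp (j + 1)) (hpq (j + 1))
  rw [sum_range_succ, sum_range_succ] at h'
  omega

theorem IsCCollapse.unique {q r r' : ℕ → ℕ} (hr : IsCCollapse N q r)
    (hr' : IsCCollapse N q r') : r = r' :=
  (hr.2.2.2 r' hr'.1 hr'.2.1 hr'.2.2.1).antisymm (hr'.2.2.2 r hr.1 hr.2.1 hr.2.2.1)

theorem mult_eq_zero_of_lt (hp : Antitone p) {k : ℕ} (hk : p 0 < k) : mult N p k = 0 := by
  refine card_eq_zero.2 (filter_eq_empty_iff.2 fun i _ => ?_)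
  have := hp (Nat.zero_le i)
  omega

theorem card_range_filter_lt {N a : ℕ} (h : a ≤ N) : #((range N).filter (· < a)) = a := by
  rw [show (range N).filter (· < a) = range a by ext; simp only [mem_filter, mem_range]; omega,
    card_range]

theorem lt_transposeP_iff (hp : IsPartition N p) {i j : ℕ} :
    i < transposeP N p j ↔ j < p i := by
  constructor
  · intro h
    by_contra hc
    have hsub : (range N).filter (fun i' => j + 1 ≤ p i') ⊆ range i := by
      intro x hx
      simp only [mem_filter, mem_range] at hx ⊢
      by_contra hxi
      have := hp.1 (not_lt.1 hxi)
      omega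
    have := card_le_card hsub
    rw [card_range] at this
    exact absurd h (not_lt.2 this)
  · intro h
    have hsub : range (i + 1) ⊆ (range N).filter (fun i' => j + 1 ≤ p i') := by
      intro x hx
      simp only [mem_filter, mem_range] at hx ⊢
      have := hp.1 (Nat.lt_succ_iff.1 hx)
      exact ⟨hp.lt_of_pos (by omega), by omega⟩
    have := card_le_card hsub
    rw [card_range] at this
    exact this

theorem transposeP_transposeP (hp : IsPartition N p) : transposeP N (transposeP N p) = p := by
  funext i
  change #((range N).filter fun j => i + 1 ≤ transposeP N p j) = p i
  simp only [Nat.add_one_le_iff, lt_transposeP_iff hp]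
  exact card_range_filter_lt (hp.le i)

theorem isPartition_transposeP (hp : IsPartition N p) : IsPartition N (transposeP N p) := by
  refine ⟨fun a b hab => card_le_card fun x hx => ?_, fun j hj => ?_, ?_⟩
  · simp only [mem_filter] at hx ⊢
    exact ⟨hx.1, by omega⟩
  · refine card_eq_zero.2 (filter_eq_empty_iff.2 fun i _ => ?_)
    have := hp.le i
    omega
  · have h : ∀ i ∈ range N, ∑ j ∈ range N, (if j + 1 ≤ p i then 1 else 0) = p i := by
      intro i _
      simp only [← card_filter, Nat.add_one_le_iff]
      exact card_range_filter_lt (hp.le i)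
    simp only [transposeP, card_filter]
    rw [sum_comm, sum_congr rfl h, hp.2.2]

theorem transposeP_eq_sum_mult (hp : IsPartition N p) (j : ℕ) :
    transposeP N p j = ∑ k ∈ Icc (j + 1) N, mult N p k := by
  rw [transposeP, card_eq_sum_card_fiberwise (f := p) (t := Icc (j + 1) N)]
  · refine sum_congr rfl fun k hk => ?_
    rw [filter_filter, mult]
    refine congrArg card (filter_congr fun i _ => ?_)
    simp only [mem_Icc] at hk
    omega
  · intro i hi
    simp only [coe_filter, Set.mem_ofPred_eq, coe_Icc, Set.mem_Icc] at hi ⊢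
    exact ⟨hi.2, hp.le i⟩

theorem TypeC.even_sum_range_of_lt {j : ℕ} (hp : IsPartition N p) (hC : TypeC N p)
    (hj : p j < p (j - 1)) : Even (∑ i ∈ range j, p i) := by
  -- The first `j` parts are the parts exceeding `p j`, i.e. a union of full multiplicity classes.
  have hS : range j = (range N).filter (p j < p ·) := by
    ext i
    simp only [mem_range, mem_filter]
    constructor
    · intro hi
      have := hp.1 (show i ≤ j - 1 by omega)
      exact ⟨hp.lt_of_pos (by omega), by omega⟩
    · rintro ⟨-, hi⟩
      by_contra h
      have := hp.1 (not_lt.1 h)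
      omega
  rw [hS, show ∑ i ∈ (range N).filter (p j < p ·), p i =
    ∑ i ∈ (range N).filter (p j < p ·), id (p i) from rfl, sum_comp]
  refine even_sum _ fun k hk => ?_
  obtain ⟨i, hi, rfl⟩ := mem_image.1 hk
  rw [filter_filter, smul_eq_mul, Nat.even_mul]
  rcases Nat.even_or_odd (p i) with he | ho
  · exact Or.inr he
  · left
    convert hC _ ho using 2
    refine congrArg card (filter_congr fun i' _ => ?_)
    rw [mem_filter] at hi
    exact ⟨And.right, fun h => ⟨h ▸ hi.2, h⟩⟩

end Partition

structure OddParts (m : ℕ) (q : ℕ → ℕ) : Prop where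
  even_length : m % 2 = 0
  odd_of_lt : ∀ j < m, q j % 2 = 1
  eq_zero_of_le : ∀ j, m ≤ j → q j = 0

section PStar

variable {n μ₀ : ℕ} {p μ : ℕ → ℕ}

theorem IsPStar.two_mul_le (hp : IsPStar n p μ₀ μ) : 2 * μ₀ ≤ 2 * n := by
  rcases Nat.eq_zero_or_pos μ₀ with h0 | h0
  · omega
  · have hmult : 0 < mult (2 * n) p (2 * μ₀) := by
      rw [hp.2.2.2 (2 * μ₀) (by omega)]
      simp
    obtain ⟨i, hi⟩ := card_pos.1 hmult
    rw [mem_filter] at hi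
    exact hi.2 ▸ hp.1.le i

theorem IsPStar.transposeP_eq (hp : IsPStar n p μ₀ μ) (j : ℕ) :
    transposeP (2 * n) p j = 2 * ∑ k ∈ Icc (j + 1) (2 * n), mult n μ k +
      if 2 * μ₀ ∈ Icc (j + 1) (2 * n) then 1 else 0 := by
  rw [transposeP_eq_sum_mult hp.1, ← sum_ite_eq' (Icc (j + 1) (2 * n)) (2 * μ₀) fun _ => 1,
    mul_sum, ← sum_add_distrib]
  refine sum_congr rfl fun k hk => ?_
  exact hp.2.2.2 k (by simp only [mem_Icc] at hk; omega)

theorem IsPStar.oddParts_transposeP (hp : IsPStar n p μ₀ μ) (hμ : μ 0 ≤ 2 * μ₀) :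
    OddParts (2 * μ₀) (transposeP (2 * n) p) where
  even_length := by omega
  odd_of_lt j hj := by
    rw [hp.transposeP_eq, if_pos (mem_Icc.2 ⟨hj, hp.two_mul_le⟩)]
    omega
  eq_zero_of_le j hj := by
    rw [hp.transposeP_eq, if_neg fun h => by simp only [mem_Icc] at h; omega,
      sum_eq_zero fun k hk => mult_eq_zero_of_lt hp.2.1 (by simp only [mem_Icc] at hk; omega)]
    rfl

end PStar

/-- The amount by which the sum of the first `j` parts of `pairCollapse q` falls short of that
of `q`. -/
def pairDefect (q : ℕ → ℕ) (j : ℕ) : ℕ :=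
  if j % 2 = 1 ∧ q j < q (j - 1) then 1 else 0

/-- Each pair of parts `q (2i) > q (2i+1)` is replaced by `(q (2i) - 1, q (2i+1) + 1)`. -/
def pairCollapse (q : ℕ → ℕ) (j : ℕ) : ℕ :=
  q j + pairDefect q j - pairDefect q (j + 1)

/-- Inverse of `pairCollapse` on `q` with only odd parts: an odd or zero entry was left alone,
an even one was moved down by one at an even index and up by one at an odd index. -/
def pairUncollapse (r : ℕ → ℕ) (j : ℕ) : ℕ :=
  if r j % 2 = 1 ∨ r j = 0 then r j else if j % 2 = 0 then r j + 1 else r j - 1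

section PairCollapse

variable {N m j : ℕ} {q : ℕ → ℕ}

theorem pairDefect_le_one (q : ℕ → ℕ) (j : ℕ) : pairDefect q j ≤ 1 := by
  unfold pairDefect
  split_ifs <;> omega

theorem pairDefect_of_even (h : j % 2 = 0) : pairDefect q j = 0 :=
  if_neg (by omega)

theorem pairDefect_succ_le (q : ℕ → ℕ) (j : ℕ) : pairDefect q (j + 1) ≤ q j := by
  unfold pairDefect
  split_ifs with h
  · rw [Nat.add_sub_cancel] at h
    omega
  · omega

theorem sum_pairCollapse_add_pairDefect (q : ℕ → ℕ) (j : ℕ) :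
    ∑ i ∈ range j, pairCollapse q i + pairDefect q j = ∑ i ∈ range j, q i := by
  induction j with
  | zero => simp [pairDefect]
  | succ j ih =>
    have := pairDefect_succ_le q j
    have := pairDefect_le_one q j
    rw [sum_range_succ, sum_range_succ, pairCollapse]
    omega

theorem dominates_pairCollapse (q : ℕ → ℕ) : Dominates q (pairCollapse q) := fun j =>
  Nat.le.intro (sum_pairCollapse_add_pairDefect q j)

theorem pairCollapse_le_of_even (h : j % 2 = 0) : pairCollapse q j ≤ q j := by
  rw [pairCollapse, pairDefect_of_even h]
  omega

theorem le_pairCollapse_of_odd (h : j % 2 = 1) : q j ≤ pairCollapse q j := by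
  rw [pairCollapse, pairDefect_of_even (show (j + 1) % 2 = 0 by omega)]
  omega

namespace OddParts

variable (ho : OddParts m q)
include ho

theorem pairDefect_eq_zero (hj : m ≤ j) : pairDefect q j = 0 := by
  refine if_neg fun ⟨hodd, hlt⟩ => ?_
  have hm := ho.even_length
  have := ho.eq_zero_of_le (j - 1) (by omega)
  omega

theorem lt_of_pairDefect_ne_zero (h : pairDefect q j ≠ 0) : j < m := by
  by_contra hj
  exact h (ho.pairDefect_eq_zero (not_lt.1 hj))

theorem pairCollapse_eq_zero (hj : m ≤ j) : pairCollapse q j = 0 := by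
  rw [pairCollapse, ho.eq_zero_of_le j hj, ho.pairDefect_eq_zero hj]
  omega

theorem lt_of_pairCollapse_ne_zero (h : pairCollapse q j ≠ 0) : j < m := by
  by_contra hj
  exact h (ho.pairCollapse_eq_zero (not_lt.1 hj))

theorem sum_range_mod_two (hj : j ≤ m) : (∑ i ∈ range j, q i) % 2 = j % 2 := by
  induction j with
  | zero => rfl
  | succ j ih =>
    have := ho.odd_of_lt j hj
    rw [sum_range_succ]
    omega

theorem pairCollapse_pair (hq : Antitone q) (hj : j % 2 = 0) (hjm : j < m) :
    q j % 2 = 1 ∧ q (j + 1) % 2 = 1 ∧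
      (q (j + 1) = q j ∧ pairCollapse q j = q j ∧ pairCollapse q (j + 1) = q j ∨
        q (j + 1) < q j ∧ pairCollapse q j = q j - 1 ∧ pairCollapse q (j + 1) = q (j + 1) + 1) := by
  have h0 := ho.odd_of_lt j hjm
  have h1 := ho.odd_of_lt (j + 1) (by have := ho.even_length; omega)
  have hle : q (j + 1) ≤ q j := hq (Nat.le_succ j)
  refine ⟨h0, h1, ?_⟩
  simp only [pairCollapse, pairDefect, Nat.add_sub_cancel]
  split_ifs <;> omega

theorem antitone_pairCollapse (hq : Antitone q) : Antitone (pairCollapse q) := by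
  refine antitone_nat_of_succ_le fun j => ?_
  rcases Nat.mod_two_eq_zero_or_one j with hj | hj
  · by_cases hjm : j < m
    · obtain ⟨ho0, ho1, ⟨-, h0, h1⟩ | ⟨hlt, h0, h1⟩⟩ := ho.pairCollapse_pair hq hj hjm <;>
        omega
    · rw [ho.pairCollapse_eq_zero (by omega)]
      exact Nat.zero_le _
  · calc pairCollapse q (j + 1) ≤ q (j + 1) := pairCollapse_le_of_even (by omega)
      _ ≤ q j := hq (Nat.le_succ j)
      _ ≤ pairCollapse q j := le_pairCollapse_of_odd hj

theorem pairCollapse_eq_iff_succ (hq : Antitone q) {k : ℕ} (hk : k % 2 = 1)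
    (hj : j % 2 = 0) : pairCollapse q j = k ↔ pairCollapse q (j + 1) = k := by
  by_cases hjm : j < m
  · obtain ⟨ho0, ho1, ⟨-, h0, h1⟩ | ⟨hlt, h0, h1⟩⟩ := ho.pairCollapse_pair hq hj hjm <;>
      omega
  · rw [ho.pairCollapse_eq_zero (by omega), ho.pairCollapse_eq_zero (by omega)]

theorem typeC_pairCollapse (hq : Antitone q) (hmN : m ≤ N) : TypeC N (pairCollapse q) := by
  intro k hk
  have hk1 : k % 2 = 1 := Nat.odd_iff.1 hk
  have hcard : #(((range N).filter (pairCollapse q · = k)).filter (· % 2 = 0)) =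
      #(((range N).filter (pairCollapse q · = k)).filter (¬ · % 2 = 0)) := by
    refine card_bij' (fun j _ => j + 1) (fun j _ => j - 1) (fun j hj => ?_) (fun j hj => ?_)
      (fun _ _ => rfl) (fun j hj => ?_)
    · simp only [mem_filter, mem_range] at hj ⊢
      have hk' := (ho.pairCollapse_eq_iff_succ hq hk1 hj.2).1 hj.1.2
      have := ho.lt_of_pairCollapse_ne_zero (j := j + 1) (by omega)
      exact ⟨⟨by omega, hk'⟩, by omega⟩
    · simp only [mem_filter, mem_range] at hj ⊢
      have hj' : j - 1 + 1 = j := by omega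
      refine ⟨⟨by omega, (ho.pairCollapse_eq_iff_succ hq hk1 (by omega)).2 ?_⟩, by omega⟩
      rw [hj', hj.1.2]
    · simp only [mem_filter] at hj
      omega
  rw [mult, ← card_filter_add_card_filter_not (· % 2 = 0), hcard]
  exact ⟨_, rfl⟩

theorem pairCollapse_dominates {r : ℕ → ℕ} (hr : IsPartition N r) (hC : TypeC N r)
    (hqr : Dominates q r) : Dominates (pairCollapse q) r := by
  intro j
  have hsum := sum_pairCollapse_add_pairDefect q j
  rcases Nat.eq_zero_or_pos (pairDefect q j) with h0 | hpos
  · exact (hqr j).trans_eq (by omega)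
  have hjm := ho.lt_of_pairDefect_ne_zero hpos.ne'
  obtain ⟨hjodd, hdrop⟩ : j % 2 = 1 ∧ q j < q (j - 1) := by
    unfold pairDefect at hpos
    split_ifs at hpos with h
    · exact h
    · omega
  suffices ∑ i ∈ range j, r i ≠ ∑ i ∈ range j, q i by
    have := hqr j
    have := pairDefect_le_one q j
    omega
  intro heq
  -- A type C partition whose first `j` parts have odd sum has `r (j - 1) = r j`, and
  -- dominance at `j - 1` and `j + 1` then forces `q (j - 1) ≤ r j ≤ q j`.
  have hodd : ¬ Even (∑ i ∈ range j, r i) := by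
    rw [heq, Nat.not_even_iff]
    exact (ho.sum_range_mod_two hjm.le).trans hjodd
  have hflat : r j = r (j - 1) :=
    (hr.1 (Nat.sub_le j 1)).antisymm (not_lt.1 fun h => hodd (hC.even_sum_range_of_lt hr h))
  obtain ⟨i, rfl⟩ : ∃ i, j = i + 1 := ⟨j - 1, by omega⟩
  have hprev := hqr i
  have hnext := hqr (i + 2)
  rw [Nat.add_sub_cancel] at hflat hdrop
  simp only [sum_range_succ] at heq hnext
  omega

theorem isCCollapse_pairCollapse (hq : IsPartition N q) : IsCCollapse N q (pairCollapse q) := by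
  have hmN : m ≤ N := by
    by_contra h
    have := ho.odd_of_lt N (by omega)
    have := hq.2.1 N le_rfl
    omega
  refine ⟨⟨ho.antitone_pairCollapse hq.1, fun i hi => ho.pairCollapse_eq_zero (hmN.trans hi),
    ?_⟩, ho.typeC_pairCollapse hq.1 hmN, dominates_pairCollapse q,
    fun r hr hC hqr => ho.pairCollapse_dominates hr hC hqr⟩
  have := sum_pairCollapse_add_pairDefect q N
  rw [ho.pairDefect_eq_zero hmN, hq.2.2] at this
  exact this

theorem pairUncollapse_pairCollapse (hq : Antitone q) : pairUncollapse (pairCollapse q) = q := by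
  funext j
  by_cases hjm : j < m
  · rcases Nat.mod_two_eq_zero_or_one j with hj | hj
    · obtain ⟨hoj, hoj1, ⟨-, h0, -⟩ | ⟨hlt, h0, -⟩⟩ := ho.pairCollapse_pair hq hj hjm
      · rw [pairUncollapse, h0, if_pos (Or.inl hoj)]
      · rw [pairUncollapse, h0, if_neg (by omega), if_pos hj]
        omega
    · have hpair := ho.pairCollapse_pair hq (j := j - 1) (by omega) (by omega)
      rw [show j - 1 + 1 = j by omega] at hpair
      obtain ⟨-, hoj, ⟨he, -, h1⟩ | ⟨hlt, -, h1⟩⟩ := hpair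
      · rw [pairUncollapse, h1, ← he, if_pos (Or.inl hoj)]
      · rw [pairUncollapse, h1, if_neg (by omega), if_neg (by omega), Nat.add_sub_cancel]
  · rw [pairUncollapse, ho.pairCollapse_eq_zero (not_lt.1 hjm), ho.eq_zero_of_le j (not_lt.1 hjm)]
    simp

end OddParts

end PairCollapse

theorem statement17_general (n : ℕ)
    (p p' : ℕ → ℕ) (μ₀ μ₀' : ℕ) (μ μ' : ℕ → ℕ)
    (hp : IsPStar n p μ₀ μ) (hpss : μ 0 ≤ 2 * μ₀)
    (hp' : IsPStar n p' μ₀' μ') (hpss' : μ' 0 ≤ 2 * μ₀')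
    (r r' : ℕ → ℕ)
    (hr : IsCCollapse (2 * n) (transposeP (2 * n) p) r)
    (hr' : IsCCollapse (2 * n) (transposeP (2 * n) p') r')
    (heq : r = r') :
    p = p' := by
  have ho := hp.oddParts_transposeP hpss
  have ho' := hp'.oddParts_transposeP hpss'
  have hq := isPartition_transposeP hp.1
  have hq' := isPartition_transposeP hp'.1
  have htranspose : transposeP (2 * n) p = transposeP (2 * n) p' := by
    rw [← ho.pairUncollapse_pairCollapse hq.1, ← ho'.pairUncollapse_pairCollapse hq'.1,
      ← hr.unique (ho.isCCollapse_pairCollapse hq),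
      ← hr'.unique (ho'.isCCollapse_pairCollapse hq'), heq]
  rw [← transposeP_transposeP hp.1, ← transposeP_transposeP hp'.1, htranspose]

/-- The map `p ↦ (pᵗ)_C` is injective on `𝒫**(2n)`: if
`p, p′ ∈ 𝒫**(2n)` satisfy `(pᵗ)_C = ((p′)ᵗ)_C`, then `p = p′`. -/
theorem statement17 (n : ℕ) (hn : 1 ≤ n)
    (p p' : ℕ → ℕ) (μ₀ μ₀' : ℕ) (μ μ' : ℕ → ℕ)
    (hp : IsPStar n p μ₀ μ) (hpss : μ 0 ≤ 2 * μ₀)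
    (hp' : IsPStar n p' μ₀' μ') (hpss' : μ' 0 ≤ 2 * μ₀')
    (r r' : ℕ → ℕ)
    (hr : IsCCollapse (2 * n) (transposeP (2 * n) p) r)
    (hr' : IsCCollapse (2 * n) (transposeP (2 * n) p') r')
    (heq : r = r') :
    p = p' :=
  statement17_general n p p' μ₀ μ₀' μ μ' hp hpss hp' hpss' r r' hr hr' heq
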